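/- arXiv:1803.06078 — 6 statements merged into one kernel-verified Lean document; each statement's English description precedes it below -/
import Mathlib

section
/- Let E be a real inner product space and let p, c, q ∈ E with dist p c = 1 and dist c q = 1. Let ε ∈ (0, 0.066], σ ≥ 3/4, δ = 2ε, and suppose dist p q ≥ σ·ε. Let x = p + δ • (c − p). Then dist q x > δ·(1 + dist p q). -/
/-! Put `t = dist p q`. Since `p` and `q` both lie on the unit sphere about `c`, the point
`x = p + δ • (c - p)` satisfies `dist q x ^ 2 = (1 - δ) t ^ 2 + δ ^ 2`, so the claim reduces to
`t * (t * (1 - δ - δ ^ 2) - 2 * δ ^ 2) > 0`, which holds once `t ≥ 3 δ / 8` and `δ ≤ 0.132`. -/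

theorem dist_add_smul_sub_sq_of_dist_eq {E : Type*} [NormedAddCommGroup E]
    [InnerProductSpace ℝ E] {p c q : E} (h : dist c q = dist p c) (δ : ℝ) :
    dist q (p + δ • (c - p)) ^ 2 = (1 - δ) * dist p q ^ 2 + δ ^ 2 * dist p c ^ 2 := by
  have hpc : dist p c = ‖c - p‖ := dist_comm p c ▸ dist_eq_norm c p
  have hpq : dist p q = ‖q - p‖ := dist_comm p q ▸ dist_eq_norm q p
  have hinner : 2 * inner ℝ (q - p) (c - p) = ‖q - p‖ ^ 2 := by
    have hcq : ‖(q - p) - (c - p)‖ = ‖c - p‖ := by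
      rw [sub_sub_sub_cancel_right, ← dist_eq_norm, dist_comm, h, hpc]
    have := norm_sub_sq_real (q - p) (c - p)
    rw [hcq] at this
    linarith
  have hqx : q - (p + δ • (c - p)) = (q - p) - δ • (c - p) := by abel
  rw [dist_eq_norm, hqx, norm_sub_sq_real, real_inner_smul_right, norm_smul,
    Real.norm_eq_abs, mul_pow, sq_abs, hpc, hpq]
  linear_combination (-δ) * hinner

theorem sq_mul_one_add_lt {δ t : ℝ} (hδ0 : 0 < δ) (hδ1 : δ ≤ 0.132) (ht : 3 / 8 * δ ≤ t) :
    (δ * (1 + t)) ^ 2 < (1 - δ) * t ^ 2 + δ ^ 2 := by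
  have ht0 : 0 < t := by linarith
  have hfactor : 2 * δ ^ 2 < t * (1 - δ - δ ^ 2) := by
    have hcoef : 0 ≤ 1 - δ - δ ^ 2 := by nlinarith
    nlinarith [mul_le_mul_of_nonneg_right ht hcoef]
  nlinarith [mul_lt_mul_of_pos_left hfactor ht0]

theorem stmt_0 {E : Type*} [NormedAddCommGroup E] [InnerProductSpace ℝ E]
    (p c q : E) (hpc : dist p c = 1) (hcq : dist c q = 1)
    (ε σ δ : ℝ) (hε0 : 0 < ε) (hε1 : ε ≤ 0.066) (hσ : σ ≥ 3 / 4) (hδ : δ = 2 * ε)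
    (hpq : dist p q ≥ σ * ε)
    (x : E) (hx : x = p + δ • (c - p)) :
    dist q x > δ * (1 + dist p q) := by
  subst hx hδ
  have ht : 3 / 8 * (2 * ε) ≤ dist p q := by nlinarith
  refine lt_of_pow_lt_pow_left₀ 2 dist_nonneg ?_
  rw [dist_add_smul_sub_sq_of_dist_eq (hcq.trans hpc.symm), hpc, one_pow, mul_one]
  exact sq_mul_one_add_lt (by positivity) (by linarith) ht
end

section
/- Let X be a metric space and f : X → ℝ be 1-Lipschitz with f strictly positive. Let ε ∈ (0, 1/2) and x, p_a, s_a, p_i, s_i ∈ X satisfy: dist x p_a ≤ ε·f x, dist p_a s_a ≤ 2ε·f p_a, dist x p_i ≥ ((2ε+5)/(1−2ε))·ε·f x, and dist p_i s_i ≤ 2ε·f p_i. Then dist x s_i ≥ dist x s_a. -/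
theorem stmt_9 {X : Type*} [MetricSpace X] (f : X → ℝ)
    (hf : LipschitzWith 1 f) (hfpos : ∀ y, 0 < f y)
    (ε : ℝ) (hε : ε ∈ Set.Ioo (0 : ℝ) (1 / 2))
    (x p_a s_a p_i s_i : X)
    (h1 : dist x p_a ≤ ε * f x)
    (h2 : dist p_a s_a ≤ 2 * ε * f p_a)
    (h3 : dist x p_i ≥ ((2 * ε + 5) / (1 - 2 * ε)) * ε * f x)
    (h4 : dist p_i s_i ≤ 2 * ε * f p_i) :
    dist x s_i ≥ dist x s_a := by
  obtain ⟨hε0, hε2⟩ := hε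
  have h12 : 0 < 1 - 2 * ε := by linarith
  have hfa : f p_a ≤ f x + dist x p_a := by
    have := hf.dist_le_mul p_a x
    rw [Real.dist_eq, dist_comm] at this
    have := abs_le.mp this
    simp at this; linarith [this.1, this.2]
  have hfi : f p_i ≤ f x + dist x p_i := by
    have := hf.dist_le_mul p_i x
    rw [Real.dist_eq, dist_comm] at this
    have := abs_le.mp this
    simp at this; linarith [this.1, this.2]
  have hub : dist x s_a ≤ dist x p_a + dist p_a s_a := dist_triangle _ _ _
  have hlb : dist x p_i ≤ dist x s_i + dist p_i s_i := by
    have := dist_triangle x s_i p_i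
    rw [dist_comm s_i p_i] at this; linarith
  have hx := (hfpos x).le
  have key : ((2 * ε + 5) / (1 - 2 * ε)) * ε * f x * (1 - 2 * ε) = (2 * ε + 5) * ε * f x := by
    field_simp
  nlinarith [mul_le_mul_of_nonneg_left h3 h12.le, dist_nonneg (x := x) (y := p_i),
    mul_le_mul_of_nonneg_left hfi (by linarith : (0:ℝ) ≤ 2 * ε)]
end

section
/- Let p₁, p₂, p₃ be three affinely independent points in a Euclidean space (a finite-dimensional real inner product space), forming a triangle with circumradius R, and let ρ > 0. If R ≤ ρ·dist p_i p_j for every pair i ≠ j, then the distance from p₃ to the line through p₁ and p₂ (the affine span of {p₁, p₂}) is at least dist p₁ p₂/(4ρ). -/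
open Real EuclideanGeometry
open scoped RealInnerProductSpace
set_option maxHeartbeats 1000000

theorem stmt_12 {V P : Type*} [NormedAddCommGroup V] [InnerProductSpace ℝ V]
    [FiniteDimensional ℝ V] [MetricSpace P] [NormedAddTorsor V P]
    (p₁ p₂ p₃ : P) (h : AffineIndependent ℝ ![p₁, p₂, p₃])
    (R : ℝ) (hR : R = (Affine.Simplex.mk ![p₁, p₂, p₃] h : Affine.Simplex ℝ P 2).circumradius)
    (ρ : ℝ) (hρ : 0 < ρ)
    (hRe : ∀ i j : Fin 3, i ≠ j → R ≤ ρ * dist (![p₁, p₂, p₃] i) (![p₁, p₂, p₃] j)) :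
    Metric.infDist p₃ (affineSpan ℝ {p₁, p₂} : Set P) ≥ dist p₁ p₂ / (4 * ρ) := by
  set t : Affine.Simplex ℝ P 2 := Affine.Simplex.mk ![p₁, p₂, p₃] h with ht
  set o : P := t.circumcenter with ho
  set a : ℝ := dist p₂ p₃ with ha
  set b : ℝ := dist p₁ p₃ with hb
  set c : ℝ := dist p₁ p₂ with hc
  have hpts0 : t.points 0 = p₁ := rfl
  have hpts1 : t.points 1 = p₂ := rfl
  have hpts2 : t.points 2 = p₃ := rfl
  have hd1 : dist p₁ o = R := by rw [hR]; exact t.dist_circumcenter_eq_circumradius 0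
  have hd2 : dist p₂ o = R := by rw [hR]; exact t.dist_circumcenter_eq_circumradius 1
  have hd3 : dist p₃ o = R := by rw [hR]; exact t.dist_circumcenter_eq_circumradius 2
  have hRnn : 0 ≤ R := hd1 ▸ dist_nonneg
  -- distinct points
  have hne12 : p₁ ≠ p₂ := by
    intro he
    have : (0 : Fin 3) = 1 := h.injective (by simp [he])
    simp at this
  have hcpos : 0 < c := dist_pos.mpr hne12
  -- side bounds
  have hRa : R ≤ ρ * a := by
    have := hRe 1 2 (by decide); simpa using this
  have hRb : R ≤ ρ * b := by
    have := hRe 0 2 (by decide); simpa using this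
  have hann : 0 ≤ a := dist_nonneg
  have hbnn : 0 ≤ b := dist_nonneg
  have htri : c ≤ a + b := by
    have := dist_triangle p₁ p₃ p₂
    rw [dist_comm p₃ p₂] at this
    linarith
  have hRpos : 0 < R := by
    have h2 : c ≤ dist p₁ o + dist o p₂ := dist_triangle _ _ _
    rw [hd1, dist_comm o p₂, hd2] at h2
    linarith
  -- vectors from circumcenter
  set u : V := p₁ -ᵥ o with hu
  set v : V := p₂ -ᵥ o with hv
  set w : V := p₃ -ᵥ o with hw
  have hnu : ‖u‖ = R := by rw [hu, ← dist_eq_norm_vsub V]; exact hd1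
  have hnv : ‖v‖ = R := by rw [hv, ← dist_eq_norm_vsub V]; exact hd2
  have hnw : ‖w‖ = R := by rw [hw, ← dist_eq_norm_vsub V]; exact hd3
  set x : ℝ := a ^ 2 with hx
  set y : ℝ := b ^ 2 with hy
  set z : ℝ := c ^ 2 with hz
  set r : ℝ := R ^ 2 with hr
  have inner_self_u : ⟪u, u⟫ = r := by rw [real_inner_self_eq_norm_sq, hnu, hr]
  have inner_self_v : ⟪v, v⟫ = r := by rw [real_inner_self_eq_norm_sq, hnv, hr]
  have inner_self_w : ⟪w, w⟫ = r := by rw [real_inner_self_eq_norm_sq, hnw, hr]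
  have key_inner : ∀ (s1 s2 : V) (d : ℝ), ‖s1‖ = R → ‖s2‖ = R → ‖s1 - s2‖ = d →
      ⟪s1, s2⟫ = r - d ^ 2 / 2 := by
    intro s1 s2 d h1 h2 h3
    have := norm_sub_sq_real s1 s2
    rw [h1, h2, h3] at this
    rw [hr]; linarith
  have huv : ⟪u, v⟫ = r - z / 2 := by
    refine key_inner u v c hnu hnv ?_
    rw [hu, hv, vsub_sub_vsub_cancel_right, ← dist_eq_norm_vsub V]
  have huw : ⟪u, w⟫ = r - y / 2 := by
    refine key_inner u w b hnu hnw ?_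
    rw [hu, hw, vsub_sub_vsub_cancel_right, ← dist_eq_norm_vsub V]
  have hvw : ⟪v, w⟫ = r - x / 2 := by
    refine key_inner v w a hnv hnw ?_
    rw [hv, hw, vsub_sub_vsub_cancel_right, ← dist_eq_norm_vsub V]
  -- circumcenter is in the affine span: get barycentric weights
  obtain ⟨wt, hwt, hcomb⟩ := eq_affineCombination_of_mem_affineSpan_of_fintype
    t.circumcenter_mem_affineSpan
  have hsum0 : wt 0 • u + wt 1 • v + wt 2 • w = 0 := by
    have h1 : o = (Finset.univ.weightedVSubOfPoint t.points o) wt +ᵥ o := by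
      conv_lhs => rw [ho, hcomb]
      rw [Finset.affineCombination_eq_weightedVSubOfPoint_vadd_of_sum_eq_one _ wt t.points hwt o]
    have h2 : (Finset.univ.weightedVSubOfPoint t.points o) wt = (0 : V) := by
      have h3 := vadd_vsub ((Finset.univ.weightedVSubOfPoint t.points o) wt) o
      rw [← h1, vsub_self] at h3
      exact h3.symm
    rw [Finset.weightedVSubOfPoint_apply, Fin.sum_univ_three, hpts0, hpts1, hpts2] at h2
    exact h2
  have hsumwt : wt 0 + wt 1 + wt 2 = 1 := by
    rw [← hwt, Fin.sum_univ_three]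
  set α : ℝ := wt 0
  set β : ℝ := wt 1
  set γ : ℝ := wt 2
  have E1 : α * r + β * (r - z / 2) + γ * (r - y / 2) = 0 := by
    have h0 := congrArg (fun s : V => ⟪s, u⟫) hsum0
    simp only [inner_add_left, real_inner_smul_left, inner_zero_left] at h0
    rw [inner_self_u, real_inner_comm u v, huv, real_inner_comm u w, huw] at h0
    exact h0
  have E2 : α * (r - z / 2) + β * r + γ * (r - x / 2) = 0 := by
    have h0 := congrArg (fun s : V => ⟪s, v⟫) hsum0
    simp only [inner_add_left, real_inner_smul_left, inner_zero_left] at h0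
    rw [inner_self_v, huv, real_inner_comm v w, hvw] at h0
    exact h0
  have E3 : α * (r - y / 2) + β * (r - x / 2) + γ * r = 0 := by
    have h0 := congrArg (fun s : V => ⟪s, w⟫) hsum0
    simp only [inner_add_left, real_inner_smul_left, inner_zero_left] at h0
    rw [inner_self_w, huw, hvw] at h0
    exact h0
  have e1 : β * z + γ * y = 2 * r := by linear_combination (-2 : ℝ) * E1 + 2 * r * hsumwt
  have e2 : α * z + γ * x = 2 * r := by linear_combination (-2 : ℝ) * E2 + 2 * r * hsumwt
  have e3 : α * y + β * x = 2 * r := by linear_combination (-2 : ℝ) * E3 + 2 * r * hsumwt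
  have key : (2 * x * y + 2 * y * z + 2 * z * x - x ^ 2 - y ^ 2 - z ^ 2) * r = x * y * z := by
    linear_combination (-(x * (y + z - x)) / 2) * e1 + (-(y * (z + x - y)) / 2) * e2 +
      (-(z * (x + y - z)) / 2) * e3 + (x * y * z) * hsumwt
  -- the comparison: z * r ≤ 4 * ρ^2 * x * y
  have hcR : c * R ≤ 2 * ρ * (a * b) := by
    have s1 : c * R ≤ (a + b) * R := mul_le_mul_of_nonneg_right htri hRnn
    have s2 : a * R ≤ a * (ρ * b) := mul_le_mul_of_nonneg_left hRb hann
    have s3 : b * R ≤ b * (ρ * a) := mul_le_mul_of_nonneg_left hRa hbnn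
    have s4 : (a + b) * R = a * R + b * R := by ring
    have s5 : a * (ρ * b) + b * (ρ * a) = 2 * ρ * (a * b) := by ring
    linarith
  have hzr : z * r ≤ 4 * ρ ^ 2 * (x * y) := by
    have h1 : (c * R) ^ 2 ≤ (2 * ρ * (a * b)) ^ 2 :=
      pow_le_pow_left₀ (by positivity) hcR 2
    have h2 : z * r = (c * R) ^ 2 := by rw [hz, hr]; ring
    have h3 : 4 * ρ ^ 2 * (x * y) = (2 * ρ * (a * b)) ^ 2 := by rw [hx, hy]; ring
    linarith
  -- inner products from p₁
  set e : V := p₂ -ᵥ p₁ with he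
  set f : V := p₃ -ᵥ p₁ with hf
  have hne' : ‖e‖ = c := by rw [he, ← dist_eq_norm_vsub V, dist_comm]
  have hnf : ‖f‖ = b := by rw [hf, ← dist_eq_norm_vsub V, dist_comm]
  have hnfe : ‖f - e‖ = a := by
    rw [hf, he, vsub_sub_vsub_cancel_right, ← dist_eq_norm_vsub V, dist_comm]
  have hfe : ⟪f, e⟫ = (y + z - x) / 2 := by
    have h0 := norm_sub_sq_real f e
    rw [hnf, hne', hnfe] at h0
    rw [hx, hy, hz]; linarith
  have hrpos : 0 < r := by rw [hr]; positivity
  have hzpos : 0 < z := by rw [hz]; positivity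
  have hbound : ∀ q ∈ (affineSpan ℝ {p₁, p₂} : Set P), c / (4 * ρ) ≤ dist p₃ q := by
    intro q hq
    have hq' : (q -ᵥ p₁) +ᵥ p₁ ∈ line[ℝ, p₁, p₂] := by rwa [vsub_vadd]
    obtain ⟨s, hs⟩ := vadd_left_mem_affineSpan_pair.mp hq'
    have hdq : dist p₃ q = ‖f - s • e‖ := by
      have hsplit : p₃ -ᵥ q = (p₃ -ᵥ p₁) - (q -ᵥ p₁) :=
        (vsub_sub_vsub_cancel_right p₃ q p₁).symm
      rw [dist_eq_norm_vsub V, hsplit, ← hs, hf, he]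
    have hdsq : (dist p₃ q) ^ 2 = y - 2 * (s * ((y + z - x) / 2)) + s ^ 2 * z := by
      rw [hdq, norm_sub_sq_real, real_inner_smul_right, hfe, hnf, norm_smul,
        Real.norm_eq_abs, mul_pow, sq_abs, hne', hy, hz]
    -- quadratic lower bound: dist^2 ≥ D/(4z) = x*y/(4r)
    have hDval : x * y / (4 * r) =
        (2 * x * y + 2 * y * z + 2 * z * x - x ^ 2 - y ^ 2 - z ^ 2) / (4 * z) := by
      rw [div_eq_div_iff (by positivity) (by positivity)]
      linear_combination (-4 : ℝ) * key
    have hquad : x * y / (4 * r) ≤ (dist p₃ q) ^ 2 := by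
      rw [hDval, hdsq, div_le_iff₀ (by positivity)]
      have hsq : (y - 2 * (s * ((y + z - x) / 2)) + s ^ 2 * z) * (4 * z) -
          (2 * x * y + 2 * y * z + 2 * z * x - x ^ 2 - y ^ 2 - z ^ 2) =
          (2 * s * z - (y + z - x)) ^ 2 := by ring
      have hsq2 := sq_nonneg (2 * s * z - (y + z - x))
      linarith
    have hfinal : (c / (4 * ρ)) ^ 2 ≤ (dist p₃ q) ^ 2 := by
      refine le_trans ?_ hquad
      rw [div_pow, div_le_div_iff₀ (by positivity) (by positivity)]
      have h4 : c ^ 2 * (4 * r) = 4 * (z * r) := by rw [hz]; ring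
      have h5 : x * y * (4 * ρ) ^ 2 = 4 * (4 * ρ ^ 2 * (x * y)) := by ring
      linarith
    have h6 : 0 ≤ c / (4 * ρ) := by positivity
    exact (pow_le_pow_iff_left₀ h6 dist_nonneg (by norm_num)).mp hfinal
  have hnonempty : (affineSpan ℝ {p₁, p₂} : Set P).Nonempty :=
    ⟨p₁, left_mem_affineSpan_pair ℝ p₁ p₂⟩
  rw [ge_iff_le, ← not_lt]
  intro hlt
  rw [Metric.infDist_lt_iff hnonempty] at hlt
  obtain ⟨q, hq, hqlt⟩ := hlt
  exact absurd (hbound q hq) (not_le.mpr hqlt)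
end

section
/- Let X be a metric space, f : X → ℝ be 1-Lipschitz, and δ ∈ (0, 1/3). Let c_i, c_j ∈ X and r_i, r_j > 0 with r_j ≤ r_i, r_i ≤ δ·f c_i, r_j ≥ (δ/(2+δ))·f c_j, and dist c_i c_j ≤ r_i + r_j. Then r_j ≥ r_i·(1−δ)/(2(1+δ)) > r_i/4; moreover, if additionally r_i = 2^m and r_j = 2^n for some integers m, n, then r_j = r_i or 2·r_j = r_i. -/
theorem stmt_15 {X : Type*} [MetricSpace X] (f : X → ℝ) (hf : LipschitzWith 1 f)
    (δ : ℝ) (hδ : δ ∈ Set.Ioo (0 : ℝ) (1 / 3)) (c_i c_j : X) (r_i r_j : ℝ)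
    (hri : 0 < r_i) (hrj : 0 < r_j) (hji : r_j ≤ r_i)
    (hi : r_i ≤ δ * f c_i) (hj : r_j ≥ (δ / (2 + δ)) * f c_j)
    (hdist : dist c_i c_j ≤ r_i + r_j) :
    r_j ≥ r_i * (1 - δ) / (2 * (1 + δ)) ∧ r_i * (1 - δ) / (2 * (1 + δ)) > r_i / 4 ∧
      (∀ m n : ℤ, r_i = 2 ^ m → r_j = 2 ^ n → r_j = r_i ∨ 2 * r_j = r_i) := by
  obtain ⟨hδ0, hδ3⟩ := hδ
  have h2δ : (0 : ℝ) < 2 + δ := by linarith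
  have hlip : |f c_i - f c_j| ≤ dist c_i c_j := by
    simpa [Real.dist_eq] using hf.dist_le_mul c_i c_j
  have hfj : f c_j ≥ f c_i - (r_i + r_j) := by
    have := abs_le.mp hlip
    linarith [this.1, this.2]
  have hj' : (2 + δ) * r_j ≥ δ * f c_j := by
    have := hj
    rw [ge_iff_le, div_mul_eq_mul_div, div_le_iff₀ h2δ] at this
    linarith
  have key : r_j ≥ r_i * (1 - δ) / (2 * (1 + δ)) := by
    rw [ge_iff_le, div_le_iff₀ (by linarith : (0:ℝ) < 2 * (1 + δ))]
    nlinarith [mul_le_mul_of_nonneg_left hfj hδ0.le]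
  have quarter : r_i * (1 - δ) / (2 * (1 + δ)) > r_i / 4 := by
    rw [gt_iff_lt, div_lt_div_iff₀ (by norm_num) (by linarith)]
    nlinarith
  refine ⟨key, quarter, fun m n hm hn => ?_⟩
  have hnm : n ≤ m := by
    rw [hm, hn] at hji
    exact_mod_cast (zpow_le_zpow_iff_right₀ (by norm_num : (1:ℝ) < 2)).mp hji
  have hlow : m - 2 < n := by
    have h4 : (2:ℝ) ^ (m - 2) < 2 ^ n := by
      rw [zpow_sub₀ (by norm_num : (2:ℝ) ≠ 0)]
      rw [← hn, ← hm]
      norm_num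
      linarith [key, quarter]
    exact_mod_cast (zpow_lt_zpow_iff_right₀ (by norm_num : (1:ℝ) < 2)).mp h4
  rcases (by omega : n = m - 1 ∨ n = m) with h | h
  · subst h
    right
    rw [hm, hn, zpow_sub₀ (by norm_num : (2:ℝ) ≠ 0)]
    ring
  · subst h
    left; rw [hm, hn]
end

section
/- Let X be a metric space, f : X → ℝ be 1-Lipschitz, and δ ∈ (0, 1/3). Let S ⊆ X, s ∈ S, and let v ∈ X satisfy dist v s ≤ dist v s' for all s' ∈ S. If there exists s' ∈ S with dist v s' ≤ (2δ/(1−δ))·f v, then dist v s ≤ (2δ/(1−3δ))·f s. -/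
theorem stmt_16 {X : Type*} [MetricSpace X] (f : X → ℝ) (hf : LipschitzWith 1 f)
    (δ : ℝ) (hδ : δ ∈ Set.Ioo (0 : ℝ) (1 / 3)) (S : Set X) (s : X) (hs : s ∈ S)
    (v : X) (hv : ∀ s' ∈ S, dist v s ≤ dist v s')
    (hnear : ∃ s' ∈ S, dist v s' ≤ (2 * δ / (1 - δ)) * f v) :
    dist v s ≤ (2 * δ / (1 - 3 * δ)) * f s := by
  obtain ⟨s', hs', hd'⟩ := hnear
  obtain ⟨hδ0, hδ3⟩ := hδ
  have h1 : (0:ℝ) < 1 - δ := by linarith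
  have h3 : (0:ℝ) < 1 - 3 * δ := by linarith
  have hd : dist v s ≤ 2 * δ / (1 - δ) * f v := (hv s' hs').trans hd'
  have hd1 : dist v s * (1 - δ) ≤ 2 * δ * f v := by
    rw [div_mul_eq_mul_div] at hd
    exact (le_div_iff₀ h1).mp hd
  have hfv : f v ≤ f s + dist v s := by
    have := hf.dist_le_mul v s
    rw [Real.dist_eq] at this; norm_num at this
    have := abs_le.mp this
    linarith [this.1]
  rw [div_mul_eq_mul_div, le_div_iff₀ h3]
  nlinarith [dist_nonneg (x := v) (y := s)]
end

section
/- Work in ℝ³ (EuclideanSpace ℝ (Fin 3)) with Lebesgue measure. Let f : ℝ³ → ℝ be 1-Lipschitz and strictly positive, δ ∈ (0, 1/3), ρ > 0, s, c ∈ ℝ³, r > 0, R > 0, and let V ⊆ ℝ³ be a measurable set with Metric.ball c r ⊆ V and V ⊆ Metric.closedBall s R. If R ≤ (2δ/(1−3δ))·f s and r ≥ ρ·f s, then ∫_V (f x)⁻³ dx ≥ (4π/3)·ρ³·((1−3δ)/(1−δ))³. -/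
open Real MeasureTheory

/- By the Lipschitz bound, `f ≤ f s + R ≤ ((1 - δ) / (1 - 3δ)) f s` on `V ⊆ closedBall s R`, so the
integrand `f⁻³` is at least `((1 - 3δ) / ((1 - δ) f s))³` on `V`; its integral over `V` is therefore at
least this constant times the volume `4π r³ / 3 ≥ 4π (ρ f s)³ / 3` of the inscribed ball `ball c r`. -/

open Metric NNReal

theorem LipschitzWith.measureReal_div_pow_le_setIntegral_inv_pow {α : Type*} [MetricSpace α]
    [ProperSpace α] [MeasurableSpace α] [OpensMeasurableSpace α] {μ : Measure α}
    [IsFiniteMeasureOnCompacts μ] {K : ℝ≥0} {f : α → ℝ} (hf : LipschitzWith K f)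
    (hfpos : ∀ x, 0 < f x) (n : ℕ) {s : α} {R : ℝ} {B V : Set α} (hB : MeasurableSet B)
    (hBV : B ⊆ V) (hV : V ⊆ closedBall s R) :
    μ.real B / (f s + K * R) ^ n ≤ ∫ x in V, (f x ^ n)⁻¹ ∂μ := by
  have hcont : Continuous fun x ↦ (f x ^ n)⁻¹ :=
    (hf.continuous.pow n).inv₀ fun x ↦ pow_ne_zero n (hfpos x).ne'
  have hint : IntegrableOn (fun x ↦ (f x ^ n)⁻¹) V μ :=
    (hcont.continuousOn.integrableOn_compact (isCompact_closedBall s R)).mono_set hV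
  have hbound : ∀ x ∈ B, ((f s + K * R) ^ n)⁻¹ ≤ (f x ^ n)⁻¹ := fun x hx ↦ by
    have hle : f x ≤ f s + K * R :=
      (hf.le_add_mul x s).trans (by gcongr; exact hV (hBV hx))
    gcongr
    exacts [pow_pos (hfpos x) n, (hfpos x).le]
  calc μ.real B / (f s + K * R) ^ n = ((f s + K * R) ^ n)⁻¹ * μ.real B := by
        rw [div_eq_inv_mul]
    _ ≤ ∫ x in B, (f x ^ n)⁻¹ ∂μ :=
        setIntegral_ge_of_const_le_real hB
          (ne_top_of_le_ne_top (isCompact_closedBall s R).measure_ne_top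
            (measure_mono (hBV.trans hV)))
          hbound (hint.mono_set hBV)
    _ ≤ ∫ x in V, (f x ^ n)⁻¹ ∂μ :=
        setIntegral_mono_set hint (.of_forall fun x ↦ (inv_pos.2 (pow_pos (hfpos x) n)).le)
          (.of_forall hBV)

theorem stmt_18_general (f : EuclideanSpace ℝ (Fin 3) → ℝ)
    (hf : LipschitzWith 1 f) (hfpos : ∀ x, 0 < f x)
    (δ ρ : ℝ) (hδ : δ ∈ Set.Ioo (0 : ℝ) (1 / 3)) (hρ : 0 < ρ)
    (s c : EuclideanSpace ℝ (Fin 3)) (r R : ℝ) (hr : 0 < r) (hR : 0 < R)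
    (V : Set (EuclideanSpace ℝ (Fin 3)))
    (hball : Metric.ball c r ⊆ V) (hout : V ⊆ Metric.closedBall s R)
    (hRle : R ≤ (2 * δ / (1 - 3 * δ)) * f s) (hrge : r ≥ ρ * f s) :
    ∫ x in V, ((f x) ^ 3)⁻¹ ≥ (4 * π / 3) * ρ ^ 3 * ((1 - 3 * δ) / (1 - δ)) ^ 3 := by
  obtain ⟨hδ0, hδ3⟩ := hδ
  have h3δ : 0 < 1 - 3 * δ := by linarith
  have h1δ : 0 < 1 - δ := by linarith
  have hfs := hfpos s
  have hcell : f s + R ≤ (1 - δ) / (1 - 3 * δ) * f s := by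
    rw [div_mul_eq_mul_div, le_div_iff₀ h3δ] at hRle ⊢
    linarith
  have hvol : volume.real (ball c r) = 4 * π / 3 * r ^ 3 := by
    simp only [measureReal_def, EuclideanSpace.volume_ball_fin_three, ENNReal.toReal_mul,
      ENNReal.toReal_pow, ENNReal.toReal_ofReal hr.le,
      ENNReal.toReal_ofReal (by positivity : 0 ≤ π * 4 / 3)]
    ring
  have key := hf.measureReal_div_pow_le_setIntegral_inv_pow (μ := volume) hfpos 3 measurableSet_ball
    hball hout
  rw [hvol, NNReal.coe_one, one_mul] at key
  refine le_trans ?_ key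
  calc 4 * π / 3 * ρ ^ 3 * ((1 - 3 * δ) / (1 - δ)) ^ 3
      = 4 * π / 3 * (ρ * f s) ^ 3 / ((1 - δ) / (1 - 3 * δ) * f s) ^ 3 := by
        field_simp
    _ ≤ 4 * π / 3 * r ^ 3 / (f s + R) ^ 3 := by
        gcongr

theorem stmt_18 (f : EuclideanSpace ℝ (Fin 3) → ℝ)
    (hf : LipschitzWith 1 f) (hfpos : ∀ x, 0 < f x)
    (δ ρ : ℝ) (hδ : δ ∈ Set.Ioo (0 : ℝ) (1 / 3)) (hρ : 0 < ρ)
    (s c : EuclideanSpace ℝ (Fin 3)) (r R : ℝ) (hr : 0 < r) (hR : 0 < R)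
    (V : Set (EuclideanSpace ℝ (Fin 3))) (hV : MeasurableSet V)
    (hball : Metric.ball c r ⊆ V) (hout : V ⊆ Metric.closedBall s R)
    (hRle : R ≤ (2 * δ / (1 - 3 * δ)) * f s) (hrge : r ≥ ρ * f s) :
    ∫ x in V, ((f x) ^ 3)⁻¹ ≥ (4 * π / 3) * ρ ^ 3 * ((1 - 3 * δ) / (1 - δ)) ^ 3 :=
  stmt_18_general f hf hfpos δ ρ hδ hρ s c r R hr hR V hball hout hRle hrge
end
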